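/- Let n ≥ 1, let A be a real n×n matrix possessing the strong Perron–Frobenius property, and let q be a polynomial with real coefficients of degree m ≥ 1 all of whose coefficients q₀, q₁, …, q_m are strictly positive. Then the matrix q(A), obtained by evaluating the polynomial q at A, possesses the strong Perron–Frobenius property. -/

import Mathlib

open Polynomial Matrix

/-- The spectral radius of a real matrix: the maximum of the moduli of the complex
roots of its characteristic polynomial. -/
noncomputable def specRadius {n : ℕ} (A : Matrix (Fin n) (Fin n) ℝ) : ℝ :=
  (((A.charpoly.map (algebraMap ℝ ℂ)).roots.map (fun z => ‖z‖₊)).sup : NNReal)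

/-- The strong Perron–Frobenius property for a real matrix. -/
def HasStrongPF {n : ℕ} (A : Matrix (Fin n) (Fin n) ℝ) : Prop :=
  0 < specRadius A ∧
  (A.charpoly.map (algebraMap ℝ ℂ)).rootMultiplicity (specRadius A : ℂ) = 1 ∧
  (∃ x : Fin n → ℝ, (∀ i, 0 < x i) ∧ A.mulVec x = (specRadius A) • x) ∧
  (∀ μ ∈ (A.charpoly.map (algebraMap ℝ ℂ)).roots,
      μ ≠ (specRadius A : ℂ) → ‖μ‖ < specRadius A)

/-- Eventual positivity of a real matrix. -/
def EventuallyPos {n : ℕ} (A : Matrix (Fin n) (Fin n) ℝ) : Prop :=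
  ∃ p : ℕ, ∀ k ≥ p, ∀ i j, 0 < (A ^ k) i j

/-!
The spectral mapping theorem with multiplicities, `χ_{q(A)} = ∏ (X - q(λ))` over the complex
eigenvalues `λ` of `A`, reduces everything to the eigenvalues. The Perron root `ρ` goes to
`q(ρ)` and the Perron vector is an eigenvector of `q(A)` for it. For every other eigenvalue
`λ`, `|λ| ≤ ρ` and `λ ≠ ρ` force `Re λ < ρ`, so `|q₀ + q₁λ| < q₀ + q₁ρ`; bounding the remaining
terms of `q(λ)` by those of `q(ρ)` gives `|q(λ)| < q(ρ)`. In particular no other eigenvalue is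
sent to `q(ρ)`, which keeps its multiplicity equal to one.
-/

theorem Multiset.count_map_eq_count_of_eq_imp {α β : Type*} [DecidableEq α] [DecidableEq β]
    {f : α → β} {s : Multiset α} {a : α} (hf : ∀ x ∈ s, f x = f a → x = a) :
    (s.map f).count (f a) = s.count a := by
  rw [Multiset.count_map, Multiset.count_eq_card_filter_eq]
  congr 1
  exact Multiset.filter_congr fun x hx => ⟨fun h => (hf x hx h.symm).symm, fun h => h ▸ rfl⟩

theorem norm_sum_lt_of_subset {ι E : Type*} [SeminormedAddCommGroup E] [DecidableEq ι]
    {s t : Finset ι} (hts : t ⊆ s) {f : ι → E} {g : ι → ℝ} (hle : ∀ i ∈ s, ‖f i‖ ≤ g i)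
    (hlt : ‖∑ i ∈ t, f i‖ < ∑ i ∈ t, g i) : ‖∑ i ∈ s, f i‖ < ∑ i ∈ s, g i := by
  rw [← Finset.sum_sdiff hts, ← Finset.sum_sdiff hts (f := g)]
  calc ‖∑ i ∈ s \ t, f i + ∑ i ∈ t, f i‖
      ≤ ‖∑ i ∈ s \ t, f i‖ + ‖∑ i ∈ t, f i‖ := norm_add_le _ _
    _ < ∑ i ∈ s \ t, g i + ∑ i ∈ t, g i :=
      add_lt_add_of_le_of_lt
        (norm_sum_le_of_le _ fun i hi => hle i (Finset.sdiff_subset hi)) hlt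

namespace Complex

theorem re_lt_of_norm_le_of_ne {z : ℂ} {ρ : ℝ} (hz : ‖z‖ ≤ ρ) (hne : z ≠ ρ) : z.re < ρ := by
  refine (z.re_le_norm.trans hz).lt_of_ne fun hre => hne ?_
  have hnorm : z.re = ‖z‖ := le_antisymm z.re_le_norm (hre ▸ hz)
  rw [← hre]
  exact ext rfl (by simp [← (re_eq_norm.mp hnorm).2])

theorem norm_add_mul_lt {a b ρ : ℝ} (ha : 0 < a) (hb : 0 < b) {z : ℂ} (hz : ‖z‖ ≤ ρ)
    (hne : z ≠ ρ) : ‖a + b * z‖ < a + b * ρ := by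
  have hre := re_lt_of_norm_le_of_ne hz hne
  have hsq : ‖z‖ ^ 2 ≤ ρ ^ 2 := pow_le_pow_left₀ (norm_nonneg z) hz 2
  have hρ : 0 ≤ ρ := (norm_nonneg z).trans hz
  rw [Complex.sq_norm, normSq_apply] at hsq
  refine (pow_lt_pow_iff_left₀ (norm_nonneg _) (by positivity) two_ne_zero).mp ?_
  rw [Complex.sq_norm, normSq_apply]
  simp only [add_re, add_im, mul_re, mul_im, ofReal_re, ofReal_im]
  nlinarith [mul_lt_mul_of_pos_left hre (mul_pos ha hb),
    mul_le_mul_of_nonneg_left hsq (sq_nonneg b)]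

end Complex

namespace Polynomial

variable {q : ℝ[X]} {z : ℂ} {ρ : ℝ}

theorem eval_pos_of_coeff_nonneg (hq : ∀ k, 0 ≤ q.coeff k) (h0 : 0 < q.coeff 0) (hρ : 0 ≤ ρ) :
    0 < q.eval ρ := by
  rw [eval_eq_sum_range]
  exact Finset.sum_pos' (fun k _ => mul_nonneg (hq k) (pow_nonneg hρ k))
    ⟨0, by simp, by simpa using h0⟩

theorem norm_coeff_smul_pow_le (hq : ∀ k, 0 ≤ q.coeff k) (hz : ‖z‖ ≤ ρ) (k : ℕ) :
    ‖q.coeff k • z ^ k‖ ≤ q.coeff k * ρ ^ k := by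
  rw [norm_smul, norm_pow, Real.norm_of_nonneg (hq k)]
  exact mul_le_mul_of_nonneg_left (pow_le_pow_left₀ (norm_nonneg z) hz k) (hq k)

theorem norm_aeval_le_eval (hq : ∀ k, 0 ≤ q.coeff k) (hz : ‖z‖ ≤ ρ) :
    ‖aeval z q‖ ≤ q.eval ρ := by
  rw [aeval_eq_sum_range, eval_eq_sum_range]
  exact norm_sum_le_of_le _ fun k _ => norm_coeff_smul_pow_le hq hz k

theorem norm_aeval_lt_eval (hq : ∀ k, 0 ≤ q.coeff k) (h0 : 0 < q.coeff 0) (h1 : 0 < q.coeff 1)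
    (hz : ‖z‖ ≤ ρ) (hne : z ≠ ρ) : ‖aeval z q‖ < q.eval ρ := by
  have hdeg : 1 ≤ q.natDegree := le_natDegree_of_ne_zero h1.ne'
  rw [aeval_eq_sum_range, eval_eq_sum_range]
  refine norm_sum_lt_of_subset (Finset.range_subset_range.mpr (by omega : 2 ≤ q.natDegree + 1))
    (fun k _ => norm_coeff_smul_pow_le hq hz k) ?_
  simpa [Finset.sum_range_succ, Complex.real_smul] using Complex.norm_add_mul_lt h0 h1 hz hne

end Polynomial

namespace Matrix

variable {ι : Type*} [Fintype ι] [DecidableEq ι]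

theorem aeval_mulVec_of_mulVec_eq_smul {R : Type*} [CommRing R] {A : Matrix ι ι R} {x : ι → R}
    {μ : R} (hx : A *ᵥ x = μ • x) (q : R[X]) : aeval A q *ᵥ x = q.eval μ • x := by
  rw [← toLinAlgEquiv'_apply, ← aeval_algHom_apply (toLinAlgEquiv' : Matrix ι ι R ≃ₐ[R] _)]
  exact Module.End.aeval_apply_of_mem_apply_eq_smul (by simpa using hx)

variable {K : Type*} [Field K] [IsAlgClosed K]

theorem card_roots_charpoly (B : Matrix ι ι K) :
    Multiset.card B.charpoly.roots = Fintype.card ι := by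
  rw [← (IsAlgClosed.splits B.charpoly).natDegree_eq_card_roots, charpoly_natDegree_eq_dim]

theorem det_sub_scalar_eq_prod_roots_charpoly (B : Matrix ι ι K) (a : K) :
    (B - scalar ι a).det = (B.charpoly.roots.map (· - a)).prod := by
  rw [← neg_sub, det_neg, ← eval_charpoly,
    (IsAlgClosed.splits B.charpoly).eval_eq_prod_roots_of_monic B.charpoly_monic,
    ← card_roots_charpoly B, ← Multiset.card_map (a - ·), ← Multiset.prod_map_neg,
    Multiset.map_map]
  simp

theorem det_aeval_eq_prod_roots_charpoly (B : Matrix ι ι K) (r : K[X]) :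
    (aeval B r).det = (B.charpoly.roots.map r.eval).prod := by
  -- both sides are multiplicative in `r`, and `r` is a constant times a product of linear factors
  let detAeval : K[X] →* K := detMonoidHom.comp (aeval B).toMonoidHom
  have hconst (c : K) : detAeval (C c) = c ^ Fintype.card ι := by
    simp [detAeval, algebraMap_eq_diagonal]
  have hlinear (a : K) : detAeval (X - C a) = (B.charpoly.roots.map (· - a)).prod := by
    show (aeval B (X - C a)).det = _
    rw [aeval_sub, aeval_X, aeval_C]
    exact det_sub_scalar_eq_prod_roots_charpoly B a
  change detAeval r = _
  rw [(IsAlgClosed.splits r).eq_prod_roots, map_mul, map_multiset_prod, Multiset.map_map]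
  simp only [Function.comp_def, hlinear, eval_mul, eval_C, eval_multiset_prod, Multiset.map_map,
    eval_sub, eval_X, Multiset.prod_map_mul, Multiset.map_const', Multiset.prod_replicate,
    card_roots_charpoly, hconst]
  rw [Multiset.prod_map_prod_map]

theorem charpoly_aeval_eq_prod (B : Matrix ι ι K) (p : K[X]) :
    (aeval B p).charpoly = (B.charpoly.roots.map fun z => X - C (p.eval z)).prod := by
  refine Polynomial.funext fun y => ?_
  have hsub : scalar ι y - aeval B p = aeval B (C y - p) := by
    simp [algebraMap_eq_diagonal]
  rw [eval_charpoly, hsub, det_aeval_eq_prod_roots_charpoly, eval_multiset_prod, Multiset.map_map]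
  simp

theorem roots_charpoly_aeval (B : Matrix ι ι K) (p : K[X]) :
    (aeval B p).charpoly.roots = B.charpoly.roots.map p.eval := by
  rw [charpoly_aeval_eq_prod, ← roots_multiset_prod_X_sub_C (B.charpoly.roots.map p.eval),
    Multiset.map_map]
  rfl

theorem roots_charpoly_map_aeval {R : Type*} [CommRing R] [Algebra R K] (A : Matrix ι ι R)
    (q : R[X]) :
    ((aeval A q).charpoly.map (algebraMap R K)).roots =
      (A.charpoly.map (algebraMap R K)).roots.map (aeval · q) := by
  have hmap : (aeval A q).map (algebraMap R K) =
      aeval (A.map (algebraMap R K)) (q.map (algebraMap R K)) := by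
    rw [aeval_map_algebraMap]
    exact (aeval_algHom_apply (Algebra.ofId R K).mapMatrix A q).symm
  rw [← charpoly_map, ← charpoly_map, hmap, roots_charpoly_aeval]
  simp [eval_map_algebraMap]

end Matrix

section specRadius

variable {n : ℕ} {A : Matrix (Fin n) (Fin n) ℝ}

theorem norm_le_specRadius {z : ℂ} (hz : z ∈ (A.charpoly.map (algebraMap ℝ ℂ)).roots) :
    ‖z‖ ≤ specRadius A :=
  NNReal.coe_le_coe.mpr (Multiset.le_sup (Multiset.mem_map_of_mem (fun z => ‖z‖₊) hz))

theorem specRadius_eq_of_mem_roots {r : ℝ}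
    (hmem : (r : ℂ) ∈ (A.charpoly.map (algebraMap ℝ ℂ)).roots)
    (hle : ∀ z ∈ (A.charpoly.map (algebraMap ℝ ℂ)).roots, ‖z‖ ≤ r) : specRadius A = r := by
  have hr : 0 ≤ r := (norm_nonneg _).trans (hle _ hmem)
  refine le_antisymm ?_ (by simpa [abs_of_nonneg hr] using norm_le_specRadius hmem)
  refine (Real.le_toNNReal_iff_coe_le hr).mp (Multiset.sup_le.mpr fun b hb => ?_)
  obtain ⟨z, hz, rfl⟩ := Multiset.mem_map.mp hb
  exact (Real.le_toNNReal_iff_coe_le hr).mpr (hle z hz)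

theorem specRadius_aeval {q : ℝ[X]} (hq : ∀ k, 0 ≤ q.coeff k)
    (hmem : (specRadius A : ℂ) ∈ (A.charpoly.map (algebraMap ℝ ℂ)).roots) :
    specRadius (aeval A q) = q.eval (specRadius A) := by
  refine specRadius_eq_of_mem_roots ?_ ?_ <;> rw [roots_charpoly_map_aeval]
  · exact Multiset.mem_map.mpr ⟨_, hmem, (ofReal_eval q _).symm⟩
  · intro μ hμ
    obtain ⟨z, hz, rfl⟩ := Multiset.mem_map.mp hμ
    exact norm_aeval_le_eval hq (norm_le_specRadius hz)

end specRadius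

theorem strongPF_posCoeff_polynomial_general {n : ℕ}
    (A : Matrix (Fin n) (Fin n) ℝ) (hA : HasStrongPF A)
    (q : Polynomial ℝ) (m : ℕ) (hm : 1 ≤ m) (hdeg : q.natDegree = m)
    (hcoeff : ∀ k ≤ m, 0 < q.coeff k) :
    HasStrongPF (Polynomial.aeval A q) := by
  obtain ⟨hρpos, hmult, ⟨x, hxpos, hx⟩, -⟩ := hA
  set ρ := specRadius A
  have hq : ∀ k, 0 ≤ q.coeff k := fun k => (le_or_gt k m).elim (fun hk => (hcoeff k hk).le)
    fun hk => (coeff_eq_zero_of_natDegree_lt (hdeg ▸ hk)).ge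
  have hlt : ∀ z ∈ (A.charpoly.map (algebraMap ℝ ℂ)).roots, z ≠ ρ → ‖aeval z q‖ < q.eval ρ :=
    fun z hz => norm_aeval_lt_eval hq (hcoeff 0 m.zero_le) (hcoeff 1 hm) (norm_le_specRadius hz)
  have hmem : (ρ : ℂ) ∈ (A.charpoly.map (algebraMap ℝ ℂ)).roots :=
    Multiset.count_pos.mp (by rw [count_roots, hmult]; exact one_pos)
  have hρq : aeval (ρ : ℂ) q = ((q.eval ρ : ℝ) : ℂ) := (ofReal_eval q ρ).symm
  have hσpos : 0 < q.eval ρ := eval_pos_of_coeff_nonneg hq (hcoeff 0 m.zero_le) hρpos.le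
  have hspec : specRadius (aeval A q) = q.eval ρ := specRadius_aeval hq hmem
  refine ⟨hspec ▸ hσpos, ?_, ⟨x, hxpos, hspec ▸ aeval_mulVec_of_mulVec_eq_smul hx q⟩, ?_⟩
  · rw [hspec, ← count_roots, roots_charpoly_map_aeval, ← hρq, ← hmult, ← count_roots]
    refine Multiset.count_map_eq_count_of_eq_imp (f := (aeval · q)) fun z hz hzρ => ?_
    by_contra hne
    simpa [hzρ, hρq, abs_of_pos hσpos] using hlt z hz hne
  · rw [hspec, roots_charpoly_map_aeval]
    intro μ hμ hne
    obtain ⟨z, hz, rfl⟩ := Multiset.mem_map.mp hμ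
    exact hlt z hz fun h => hne (h ▸ hρq)

/-- Polynomials of degree at least one with all coefficients strictly positive
preserve the strong Perron–Frobenius property. -/
theorem strongPF_posCoeff_polynomial {n : ℕ} (hn : 1 ≤ n)
    (A : Matrix (Fin n) (Fin n) ℝ) (hA : HasStrongPF A)
    (q : Polynomial ℝ) (m : ℕ) (hm : 1 ≤ m) (hdeg : q.natDegree = m)
    (hcoeff : ∀ k ≤ m, 0 < q.coeff k) :
    HasStrongPF (Polynomial.aeval A q) :=
  strongPF_posCoeff_polynomial_general A hA q m hm hdeg hcoeff
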